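/- Let G be a weakly reversible reaction network, and for w ∈ ℝ^S let T_w denote the set of ⟨w,·⟩-maximal reactants. If for every w ∈ ℝ^S, T_w being a union of linkage classes implies w is orthogonal to the stoichiometric subspace, then G is strongly endotactic. -/
import Mathlib


open Finset

/-- A reaction network with species set `Fin n`: a finite set of complexes in `ℝ^n`
and a finite set of reactions between complexes. -/
structure ReactionNetwork (n : ℕ) where
  complexes : Finset (Fin n → ℝ)
  reactions : Finset ((Fin n → ℝ) × (Fin n → ℝ))
  source_mem : ∀ r ∈ reactions, r.1 ∈ complexes
  target_mem : ∀ r ∈ reactions, r.2 ∈ complexes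

/-- The standard dot product on `Fin n → ℝ`. -/
def dotp {n : ℕ} (w x : Fin n → ℝ) : ℝ := ∑ i, w i * x i

/-- The edge relation of the reaction graph. -/
def ReactionNetwork.step {n : ℕ} (G : ReactionNetwork n) (y y' : Fin n → ℝ) : Prop :=
  (y, y') ∈ G.reactions

/-- Two complexes are linked if they lie in the same linkage class (connected
component of the reaction graph): the equivalence closure of the edge relation. -/
def ReactionNetwork.linked {n : ℕ} (G : ReactionNetwork n) : (Fin n → ℝ) → (Fin n → ℝ) → Prop :=
  Relation.EqvGen G.step

/-- Weak reversibility: every linkage class is strongly connected; equivalently,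
for every reaction there is a directed path back from product to reactant. -/
def ReactionNetwork.WeaklyReversible {n : ℕ} (G : ReactionNetwork n) : Prop :=
  ∀ r ∈ G.reactions, Relation.ReflTransGen G.step r.2 r.1

/-- `w` is orthogonal to the stoichiometric subspace (the span of reaction vectors). -/
def ReactionNetwork.OrthToStoich {n : ℕ} (G : ReactionNetwork n) (w : Fin n → ℝ) : Prop :=
  ∀ r ∈ G.reactions, dotp w (r.2 - r.1) = 0

/-- Endotactic: for every `w`, every `w`-essential reaction whose reactant is
`⟨w,·⟩`-maximal among reactants of `w`-essential reactions satisfies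
`⟨w, y' − y⟩ < 0`. -/
def ReactionNetwork.Endotactic {n : ℕ} (G : ReactionNetwork n) : Prop :=
  ∀ w : Fin n → ℝ, ∀ r ∈ G.reactions, dotp w (r.2 - r.1) ≠ 0 →
    (∀ r' ∈ G.reactions, dotp w (r'.2 - r'.1) ≠ 0 → dotp w r'.1 ≤ dotp w r.1) →
    dotp w (r.2 - r.1) < 0

/-- Strongly endotactic: endotactic, and for every `w` not orthogonal to the
stoichiometric subspace there is a reaction `(y, y')` with `⟨w, y' − y⟩ < 0` whose
reactant `y` is `⟨w,·⟩`-maximal among all reactants. -/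
def ReactionNetwork.StronglyEndotactic {n : ℕ} (G : ReactionNetwork n) : Prop :=
  G.Endotactic ∧
  ∀ w : Fin n → ℝ, ¬ G.OrthToStoich w →
    ∃ r ∈ G.reactions, dotp w (r.2 - r.1) < 0 ∧
      ∀ r' ∈ G.reactions, dotp w r'.1 ≤ dotp w r.1

/-- The set `T_w` of `⟨w,·⟩`-maximal reactants of a network. -/
def ReactionNetwork.maxReactants {n : ℕ} (G : ReactionNetwork n) (w : Fin n → ℝ) :
    Set (Fin n → ℝ) :=
  {y | (∃ y', (y, y') ∈ G.reactions) ∧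
    ∀ z z', (z, z') ∈ G.reactions → dotp w z ≤ dotp w y}

lemma dotp_sub' {n : ℕ} (w x y : Fin n → ℝ) : dotp w (x - y) = dotp w x - dotp w y := by
  simp [dotp, mul_sub, Finset.sum_sub_distrib]

/-- if `G` is weakly reversible and, for every `w`, the set `T_w` of
`⟨w,·⟩`-maximal reactants being a union of linkage classes (i.e. closed under the
linkage relation within the complexes) forces `w` to be orthogonal to the
stoichiometric subspace, then `G` is strongly endotactic. -/
theorem weakly_reversible_maxReactants_criterion_strongly_endotactic {n : ℕ}
    (G : ReactionNetwork n) (hwr : G.WeaklyReversible)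
    (hcrit : ∀ w : Fin n → ℝ,
      (∀ y ∈ G.maxReactants w, ∀ z ∈ G.complexes, G.linked y z → z ∈ G.maxReactants w) →
      G.OrthToStoich w) :
    G.StronglyEndotactic := by
  constructor
  · -- Endotactic
    intro w r hr hne hmax
    by_contra hge
    push_neg at hge
    have hgt : dotp w r.1 < dotp w r.2 := by
      rw [dotp_sub'] at hne hge
      rcases lt_or_eq_of_le hge with h | h
      · linarith
      · exact absurd h.symm hne
    have key : ∀ a b, Relation.ReflTransGen G.step a b →
        dotp w r.1 < dotp w a → dotp w r.1 < dotp w b := by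
      intro a b hab
      induction hab with
      | refl => exact id
      | @tail b c hab hbc ih =>
        intro ha
        have hb := ih ha
        by_cases h : dotp w ((b, c).2 - (b, c).1) = 0
        · rw [dotp_sub'] at h
          simp only at h
          linarith
        · have := hmax (b, c) hbc h
          simp only at this
          linarith
    have := key r.2 r.1 (hwr r hr) hgt
    linarith
  · -- Strong part
    intro w hnorth
    by_contra hno
    push_neg at hno
    have hno' : ∀ r ∈ G.reactions, (∀ r' ∈ G.reactions, dotp w r'.1 ≤ dotp w r.1) →
        0 ≤ dotp w (r.2 - r.1) := by
      intro r hr hmax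
      by_contra hlt
      push_neg at hlt
      obtain ⟨r', hr', hgt⟩ := hno r hr hlt
      exact absurd (hmax r' hr') (not_le.mpr hgt)
    -- Lemma A: one forward step preserves membership in T_w
    have stepT : ∀ y y', y ∈ G.maxReactants w → (y, y') ∈ G.reactions →
        y' ∈ G.maxReactants w := by
      intro y y' hy hyy'
      obtain ⟨⟨y₀, hy₀⟩, hymax⟩ := hy
      have hmaxpair : ∀ r' ∈ G.reactions, dotp w r'.1 ≤ dotp w (y, y').1 := by
        intro r' hr'
        exact hymax r'.1 r'.2 (by simpa using hr')
      have h1 : 0 ≤ dotp w (y' - y) := hno' (y, y') hyy' hmaxpair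
      rw [dotp_sub'] at h1
      rcases (Relation.ReflTransGen.cases_head (hwr (y, y') hyy')) with heq | ⟨c, hstep, _⟩
      · simp only at heq
        rw [heq]
        exact ⟨⟨y', hyy'⟩, hymax⟩
      · have h2 : dotp w y' ≤ dotp w y := hymax y' c hstep
        have heq : dotp w y' = dotp w y := le_antisymm h2 (by linarith)
        exact ⟨⟨c, hstep⟩, fun z z' hz => le_trans (hymax z z' hz) (le_of_eq heq.symm)⟩
    -- Lemma B: paths preserve membership
    have pathT : ∀ a b, Relation.ReflTransGen G.step a b →
        a ∈ G.maxReactants w → b ∈ G.maxReactants w := by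
      intro a b hab
      induction hab with
      | refl => exact id
      | @tail b c hab hbc ih => exact fun ha => stepT b c (ih ha) hbc
    -- Lemma C: linkage preserves membership
    have linkT : ∀ a b, G.linked a b → (a ∈ G.maxReactants w ↔ b ∈ G.maxReactants w) := by
      intro a b hab
      induction hab with
      | rel a b hab =>
        constructor
        · exact fun ha => stepT a b ha hab
        · exact fun hb => pathT b a (hwr (a, b) hab) hb
      | refl a => exact Iff.rfl
      | symm a b h ih => exact ih.symm
      | trans a b c h1 h2 ih1 ih2 => exact ih1.trans ih2
    have horth : G.OrthToStoich w := by
      apply hcrit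
      intro y hy z _ hlink
      exact (linkT y z hlink).mp hy
    exact hnorth horth
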